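/- For real z with |z| < 1 and z²/|z−1| < 4, one has −log(1−z)/z = ∑_{k=0}^∞ z^k/(k+1) = ((z−2)/(2(z−1))) · ∑_{n=0}^∞ (1/((2n+1)·C(2n,n))) · (z²/(z−1))^n, where C(2n,n) is the central binomial coefficient. -/

import Mathlib

/-!
Both sides equal `-log (1 - z) / z`. With `w = z² / (z - 1)`, the Beta integral
`∫₀¹ tⁿ (1 - t)ⁿ dt = 1 / ((2n + 1) C(2n, n))` turns the second series into
`∫₀¹ dt / (1 - w t (1 - t))`, summing the geometric series under the integral
(`t (1 - t) ≤ 1/4` and `|w| < 4`). Since `1 - w t (1 - t) = (1 - z t) (1 - z (1 - t)) / (1 - z)`,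
partial fractions reduce this integral to `(1 - z) / (2 - z)` times twice
`∫₀¹ dt / (1 - z t) = -log (1 - z) / z`.
-/

open Nat Real Set intervalIntegral MeasureTheory
open scoped Interval

theorem integral_pow_mul_one_sub_pow (m n : ℕ) :
    ∫ t in (0 : ℝ)..1, t ^ m * (1 - t) ^ n = m ! * n ! / (m + n + 1)! := by
  have hΓ := Complex.Gamma_mul_Gamma_eq_betaIntegral (s := m + 1) (t := n + 1)
    (by simp; positivity) (by simp; positivity)
  have hsum : (m + 1 : ℂ) + (n + 1) = ((m + n + 1 : ℕ) : ℂ) + 1 := by push_cast; ring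
  have hβ : Complex.betaIntegral (m + 1) (n + 1) = ∫ t in (0 : ℝ)..1, t ^ m * (1 - t) ^ n := by
    simp only [Complex.betaIntegral, add_sub_cancel_right, Complex.cpow_natCast,
      ← integral_ofReal]
    push_cast
    rfl
  rw [hsum, hβ, Complex.Gamma_nat_eq_factorial, Complex.Gamma_nat_eq_factorial,
    Complex.Gamma_nat_eq_factorial] at hΓ
  rw [eq_div_iff (by positivity)]
  exact_mod_cast (hΓ.trans (mul_comm _ _)).symm

theorem integral_pow_mul_one_sub_pow_self (n : ℕ) :
    ∫ t in (0 : ℝ)..1, t ^ n * (1 - t) ^ n = 1 / ((2 * n + 1) * (2 * n).choose n) := by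
  have hchoose : ((2 * n).choose n * n ! * n ! : ℝ) = (2 * n)! := by
    exact_mod_cast two_mul n ▸ add_choose_mul_factorial_mul_factorial n n
  have hfact : ((2 * n + 1)! : ℝ) = (2 * n + 1) * (2 * n)! := by
    push_cast [factorial_succ]; ring
  rw [integral_pow_mul_one_sub_pow, ← two_mul, hfact, ← hchoose]
  field_simp

theorem hasSum_integral_pow_of_abs_le {f : ℝ → ℝ} {a b q : ℝ}
    (hf : AEStronglyMeasurable f (volume.restrict (Ι a b))) (hq₀ : 0 ≤ q) (hq : q < 1)
    (hfq : ∀ t ∈ Ι a b, |f t| ≤ q) :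
    HasSum (fun n : ℕ ↦ ∫ t in a..b, f t ^ n) (∫ t in a..b, (1 - f t)⁻¹) := by
  refine hasSum_integral_of_dominated_convergence (fun n _ ↦ q ^ n) (fun n ↦ hf.pow n)
    (fun n ↦ .of_forall fun t ht ↦ ?_)
    (.of_forall fun _ _ ↦ summable_geometric_of_lt_one hq₀ hq) intervalIntegrable_const
    (.of_forall fun t ht ↦ hasSum_geometric_of_abs_lt_one ((hfq t ht).trans_lt hq))
  rw [norm_pow, Real.norm_eq_abs]
  exact pow_le_pow_left₀ (abs_nonneg _) (hfq t ht) n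

theorem hasSum_centralBinom_series {w : ℝ} (hw : |w| < 4) :
    HasSum (fun n : ℕ ↦ 1 / ((2 * n + 1) * (2 * n).choose n) * w ^ n)
      (∫ t in (0 : ℝ)..1, (1 - w * (t * (1 - t)))⁻¹) := by
  have hbound : ∀ t ∈ Ι (0 : ℝ) 1, |w * (t * (1 - t))| ≤ |w| / 4 := by
    intro t ht
    rw [uIoc_of_le zero_le_one] at ht
    rw [abs_mul, abs_of_nonneg (mul_nonneg ht.1.le (sub_nonneg.2 ht.2))]
    nlinarith [abs_nonneg w, sq_nonneg (t - 1 / 2)]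
  convert hasSum_integral_pow_of_abs_le (by fun_prop) (by positivity) (by linarith) hbound
    using 2 with n
  rw [← integral_pow_mul_one_sub_pow_self, mul_comm, ← intervalIntegral.integral_const_mul]
  simp only [mul_pow]

theorem one_sub_mul_pos {z t : ℝ} (hz : z < 1) (ht : t ∈ Icc 0 1) : 0 < 1 - z * t := by
  rcases le_total 0 z with h | h <;> nlinarith [ht.1, ht.2]

theorem integral_inv_one_sub_mul {z : ℝ} (hz : z < 1) (hz₀ : z ≠ 0) :
    ∫ t in (0 : ℝ)..1, (1 - z * t)⁻¹ = -log (1 - z) / z := by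
  have h0 : (0 : ℝ) ∉ [[1 - z, 1]] := by
    rw [mem_uIcc]
    rintro (h | h) <;> linarith [h.1, h.2]
  rw [integral_comp_sub_mul (fun x ↦ x⁻¹) hz₀, mul_zero, mul_one, sub_zero, integral_inv h0,
    smul_eq_mul, one_div, Real.log_inv, neg_div, div_eq_inv_mul, mul_neg]

theorem integral_inv_one_sub_mul_mul_one_sub {z : ℝ} (hz : z < 1) (hz₀ : z ≠ 0) :
    ∫ t in (0 : ℝ)..1, (1 - z ^ 2 / (z - 1) * (t * (1 - t)))⁻¹
      = 2 * (1 - z) / (2 - z) * (-log (1 - z) / z) := by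
  have hpos : ∀ t ∈ [[(0 : ℝ), 1]], 0 < 1 - z * t ∧ 0 < 1 - z * (1 - t) := by
    rw [uIcc_of_le zero_le_one]
    exact fun t ht ↦
      ⟨one_sub_mul_pos hz ht, one_sub_mul_pos hz ⟨sub_nonneg.2 ht.2, sub_le_self _ ht.1⟩⟩
  have hsplit : EqOn (fun t ↦ (1 - z ^ 2 / (z - 1) * (t * (1 - t)))⁻¹)
      (fun t ↦ (1 - z) / (2 - z) * ((1 - z * t)⁻¹ + (1 - z * (1 - t))⁻¹)) [[0, 1]] := by
    intro t ht
    have h₁ := (hpos t ht).1.ne'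
    have h₂ := (hpos t ht).2.ne'
    have hfactor : 1 - z ^ 2 / (z - 1) * (t * (1 - t))
        = (1 - z * t) * (1 - z * (1 - t)) / (1 - z) := by
      field_simp [show z - 1 ≠ 0 by linarith, show 1 - z ≠ 0 by linarith]
      ring
    simp only [hfactor]
    field_simp [show 1 - z ≠ 0 by linarith, show 2 - z ≠ 0 by linarith]
    ring
  have hint : IntervalIntegrable (fun t ↦ (1 - z * t)⁻¹) volume 0 1 :=
    intervalIntegrable_inv (fun t ht ↦ (hpos t ht).1.ne') (by fun_prop)
  have hint' : IntervalIntegrable (fun t ↦ (1 - z * (1 - t))⁻¹) volume 0 1 :=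
    intervalIntegrable_inv (fun t ht ↦ (hpos t ht).2.ne') (by fun_prop)
  rw [integral_congr hsplit, intervalIntegral.integral_const_mul, integral_add hint hint',
    integral_comp_sub_left (fun t ↦ (1 - z * t)⁻¹), sub_self, sub_zero,
    integral_inv_one_sub_mul hz hz₀]
  ring

theorem hasSum_pow_div_succ {z : ℝ} (hz : |z| < 1) (hz₀ : z ≠ 0) :
    HasSum (fun k : ℕ ↦ z ^ k / ((k : ℝ) + 1)) (-log (1 - z) / z) := by
  refine ((hasSum_pow_div_log_of_abs_lt_one hz).div_const z).congr_fun fun k ↦ ?_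
  field_simp
  ring

theorem log_transformation (z : ℝ) (hz : |z| < 1) (hz' : z ^ 2 / |z - 1| < 4) :
    (z ≠ 0 → -Real.log (1 - z) / z = ∑' k : ℕ, z ^ k / ((k : ℝ) + 1)) ∧
    ∑' k : ℕ, z ^ k / ((k : ℝ) + 1) =
      ((z - 2) / (2 * (z - 1))) *
        ∑' n : ℕ, (1 / ((2 * (n : ℝ) + 1) * (Nat.choose (2 * n) n : ℝ))) *
          (z ^ 2 / (z - 1)) ^ n := by
  refine ⟨fun hz₀ ↦ (hasSum_pow_div_succ hz hz₀).tsum_eq.symm, ?_⟩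
  rcases eq_or_ne z 0 with rfl | hz₀
  · simp [zero_pow_eq, ite_div]
  have hz₁ : z < 1 := (le_abs_self z).trans_lt hz
  have hw : |z ^ 2 / (z - 1)| < 4 := by rwa [abs_div, abs_of_nonneg (sq_nonneg z)]
  rw [(hasSum_pow_div_succ hz hz₀).tsum_eq, (hasSum_centralBinom_series hw).tsum_eq,
    integral_inv_one_sub_mul_mul_one_sub hz₁ hz₀]
  field_simp [show z - 1 ≠ 0 by linarith, show 2 - z ≠ 0 by linarith]
  ring
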